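/- arXiv:0804.1709 — 5 statements merged into one kernel-verified Lean document; each statement's English description precedes it below -/
import Mathlib

section
/- Let x₀, x ∈ ℝ² with x ≠ x₀, let c : ℝ² → ℝ be differentiable at x with c(x₀ + t • (x − x₀)) = c(x) for all real t > 0, and define φ(z) = c(z) · ‖z − x₀‖². Then φ is differentiable at x, ∇φ(x) = 2 c(x) (x − x₀) + ‖x − x₀‖² ∇c(x), and ‖∇φ(x)‖² = 4 c(x)² ‖x − x₀‖² + ‖x − x₀‖⁴ ‖∇c(x)‖²; in particular ‖∇φ(x)‖ ≥ 2 |c(x)| ‖x − x₀‖. -/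
/-!
Since `c` is constant along the ray from `x₀` through `x`, its derivative in the direction
`x - x₀` vanishes, so `∇c(x) ⊥ x - x₀`. The product rule splits `∇φ(x)` into a radial part
`2 c(x) (x - x₀)` and the angular part `‖x - x₀‖² ∇c(x)`, and Pythagoras gives its norm.
-/

open RealInnerProductSpace Filter Topology

section NormedSpace

variable {E F : Type*} [NormedAddCommGroup E] [NormedSpace ℝ E]
  [NormedAddCommGroup F] [NormedSpace ℝ F]

theorem fderiv_apply_sub_eq_zero_of_eq_on_ray {c : E → F} {x₀ x : E}
    (hc : DifferentiableAt ℝ c x) (hray : ∀ t : ℝ, 0 < t → c (x₀ + t • (x - x₀)) = c x) :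
    fderiv ℝ c x (x - x₀) = 0 := by
  have hline : HasDerivAt (fun t : ℝ => x₀ + t • (x - x₀)) (x - x₀) 1 := by
    simpa using ((hasDerivAt_id (1 : ℝ)).smul_const (x - x₀)).const_add x₀
  have hc' : HasFDerivAt c (fderiv ℝ c x) (x₀ + (1 : ℝ) • (x - x₀)) := by
    simpa using hc.hasFDerivAt
  have hconst : (fun _ : ℝ => c x) =ᶠ[𝓝 1] fun t => c (x₀ + t • (x - x₀)) :=
    (eventually_gt_nhds one_pos).mono fun t ht => (hray t ht).symm
  exact (hc'.comp_hasDerivAt 1 hline).unique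
    ((hasDerivAt_const 1 (c x)).congr_of_eventuallyEq hconst.symm)

end NormedSpace

section InnerProductSpace

variable {E : Type*} [NormedAddCommGroup E] [InnerProductSpace ℝ E] [CompleteSpace E]

theorem HasGradientAt.mul {f g : E → ℝ} {f' g' x : E} (hf : HasGradientAt f f' x)
    (hg : HasGradientAt g g' x) :
    HasGradientAt (fun z => f z * g z) (f x • g' + g x • f') x := by
  rw [hasGradientAt_iff_hasFDerivAt] at *
  rw [map_add, map_smul, map_smul]
  exact hf.mul hg

theorem hasGradientAt_norm_sub_sq (x₀ x : E) :
    HasGradientAt (fun z => ‖z - x₀‖ ^ 2) ((2 : ℝ) • (x - x₀)) x := by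
  rw [hasGradientAt_iff_hasFDerivAt]
  refine (hasFDerivAt_sub_const x₀ (x := x)).norm_sq.congr_fderiv ?_
  ext y
  simp

theorem inner_gradient_sub_eq_zero_of_eq_on_ray {c : E → ℝ} {x₀ x : E}
    (hc : DifferentiableAt ℝ c x) (hray : ∀ t : ℝ, 0 < t → c (x₀ + t • (x - x₀)) = c x) :
    ⟪gradient c x, x - x₀⟫ = 0 := by
  rw [inner_gradient_left]
  exact fderiv_apply_sub_eq_zero_of_eq_on_ray hc hray

end InnerProductSpace

theorem gradient_weight_decomposition_general
    (x₀ x : EuclideanSpace ℝ (Fin 2))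
    (c : EuclideanSpace ℝ (Fin 2) → ℝ) (hc : DifferentiableAt ℝ c x)
    (hray : ∀ t : ℝ, 0 < t → c (x₀ + t • (x - x₀)) = c x) :
    DifferentiableAt ℝ (fun z => c z * ‖z - x₀‖ ^ 2) x ∧
    gradient (fun z => c z * ‖z - x₀‖ ^ 2) x
      = (2 * c x) • (x - x₀) + (‖x - x₀‖ ^ 2) • gradient c x ∧
    ‖gradient (fun z => c z * ‖z - x₀‖ ^ 2) x‖ ^ 2
      = 4 * c x ^ 2 * ‖x - x₀‖ ^ 2 + ‖x - x₀‖ ^ 4 * ‖gradient c x‖ ^ 2 ∧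
    2 * |c x| * ‖x - x₀‖ ≤ ‖gradient (fun z => c z * ‖z - x₀‖ ^ 2) x‖ := by
  set v := x - x₀
  have hgrad : HasGradientAt (fun z => c z * ‖z - x₀‖ ^ 2)
      ((2 * c x) • v + ‖v‖ ^ 2 • gradient c x) x := by
    have := hc.hasGradientAt.mul (hasGradientAt_norm_sub_sq x₀ x)
    rwa [smul_smul, mul_comm] at this
  have horth : ⟪(2 * c x) • v, ‖v‖ ^ 2 • gradient c x⟫ = 0 := by
    rw [real_inner_smul_left, real_inner_smul_right, real_inner_comm,
      inner_gradient_sub_eq_zero_of_eq_on_ray hc hray, mul_zero, mul_zero]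
  have hpyth : ‖(2 * c x) • v + ‖v‖ ^ 2 • gradient c x‖ ^ 2
      = ‖(2 * c x) • v‖ ^ 2 + ‖‖v‖ ^ 2 • gradient c x‖ ^ 2 := by
    rw [norm_add_sq_real, horth, mul_zero, add_zero]
  have hradial : ‖(2 * c x) • v‖ = 2 * |c x| * ‖v‖ := by
    rw [norm_smul, Real.norm_eq_abs, abs_mul, abs_two]
  refine ⟨hgrad.differentiableAt, hgrad.gradient, ?_, ?_⟩
  · rw [hgrad.gradient, hpyth, hradial, norm_smul, norm_pow, norm_norm]
    rw [mul_pow, mul_pow, sq_abs]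
    ring
  · rw [hgrad.gradient, ← hradial]
    exact le_of_sq_le_sq (hpyth ▸ le_add_of_nonneg_right (sq_nonneg _)) (norm_nonneg _)

theorem gradient_weight_decomposition
    (x₀ x : EuclideanSpace ℝ (Fin 2)) (hx : x ≠ x₀)
    (c : EuclideanSpace ℝ (Fin 2) → ℝ) (hc : DifferentiableAt ℝ c x)
    (hray : ∀ t : ℝ, 0 < t → c (x₀ + t • (x - x₀)) = c x) :
    DifferentiableAt ℝ (fun z => c z * ‖z - x₀‖ ^ 2) x ∧
    gradient (fun z => c z * ‖z - x₀‖ ^ 2) x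
      = (2 * c x) • (x - x₀) + (‖x - x₀‖ ^ 2) • gradient c x ∧
    ‖gradient (fun z => c z * ‖z - x₀‖ ^ 2) x‖ ^ 2
      = 4 * c x ^ 2 * ‖x - x₀‖ ^ 2 + ‖x - x₀‖ ^ 4 * ‖gradient c x‖ ^ 2 ∧
    2 * |c x| * ‖x - x₀‖ ≤ ‖gradient (fun z => c z * ‖z - x₀‖ ^ 2) x‖ :=
  gradient_weight_decomposition_general x₀ x c hc hray
end

section
/- Let Ω be an open, bounded, convex subset of ℝ² with 0 ∈ Ω and Ω ⊆ closedBall 0 D for some D > 0, let g = gauge Ω, let ā > 0, and set φ = ā · g². If φ is differentiable at a point v ≠ 0, then ⟪∇φ(v), v⟫ = 2 φ(v) and ‖∇φ(v)‖ ≥ 2 ā ‖v‖ / D². -/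
open RealInnerProductSpace Metric

/-! φ = ā·(gauge Ω)² is positively 2-homogeneous, so differentiating along the ray
t ↦ φ (t • v) at t = 1 gives Euler's identity ⟪∇φ(v), v⟫ = 2 φ(v). Since Ω lies in the ball of
radius D, gauge Ω v ≥ ‖v‖ / D, and Cauchy–Schwarz turns 2 ā ‖v‖² / D² ≤ ⟪∇φ(v), v⟫ into the
bound on ‖∇φ(v)‖. -/

theorem fderiv_apply_self_of_homogeneous {E F : Type*} [NormedAddCommGroup E] [NormedSpace ℝ E]
    [NormedAddCommGroup F] [NormedSpace ℝ F] {f : E → F} {x : E} {n : ℕ}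
    (hf : ∀ t : ℝ, 0 < t → f (t • x) = t ^ n • f x) (hx : DifferentiableAt ℝ f x) :
    fderiv ℝ f x x = (n : ℝ) • f x := by
  have hray : HasDerivAt (fun t : ℝ => f (t • x)) (fderiv ℝ f x x) 1 := by
    have hline : HasDerivAt (fun t : ℝ => t • x) x 1 := by
      simpa using (hasDerivAt_id (1 : ℝ)).smul_const x
    exact (by simpa using hx.hasFDerivAt : HasFDerivAt f (fderiv ℝ f x) ((1 : ℝ) • x))
      |>.comp_hasDerivAt 1 hline
  have hpow : HasDerivAt (fun t : ℝ => t ^ n • f x) ((n : ℝ) • f x) 1 := by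
    simpa using (hasDerivAt_pow n (1 : ℝ)).smul_const (f x)
  have hnear : (fun t : ℝ => f (t • x)) =ᶠ[nhds 1] fun t => t ^ n • f x := by
    filter_upwards [eventually_gt_nhds one_pos] with t ht using hf t ht
  exact hray.unique (hpow.congr_of_eventuallyEq hnear)

theorem gauge_sq_weight_gradient_bound_general
    (Ω : Set (EuclideanSpace ℝ (Fin 2)))
    (hΩo : IsOpen Ω)
    (h0 : (0 : EuclideanSpace ℝ (Fin 2)) ∈ Ω)
    (D : ℝ) (hD : 0 < D) (hΩD : Ω ⊆ closedBall 0 D)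
    (abar : ℝ) (habar : 0 < abar)
    (v : EuclideanSpace ℝ (Fin 2)) (hv : v ≠ 0)
    (hdiff : DifferentiableAt ℝ (fun z => abar * gauge Ω z ^ 2) v) :
    ⟪gradient (fun z => abar * gauge Ω z ^ 2) v, v⟫ = 2 * (abar * gauge Ω v ^ 2) ∧
    2 * abar * ‖v‖ / D ^ 2 ≤ ‖gradient (fun z => abar * gauge Ω z ^ 2) v‖ := by
  set φ := fun z => abar * gauge Ω z ^ 2
  have hhom (t : ℝ) (ht : 0 < t) : φ (t • v) = t ^ 2 • φ v := by
    simp only [φ, gauge_smul_of_nonneg ht.le, smul_eq_mul]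
    ring
  have heuler : ⟪gradient φ v, v⟫ = 2 * φ v := by
    rw [inner_gradient_left]
    simpa using fderiv_apply_self_of_homogeneous hhom hdiff
  refine ⟨heuler, ?_⟩
  have hgauge : ‖v‖ / D ≤ gauge Ω v :=
    le_gauge_of_subset_closedBall (absorbent_nhds_zero (hΩo.mem_nhds h0)) hD.le hΩD
  have hv' : 0 < ‖v‖ := norm_pos_iff.mpr hv
  calc 2 * abar * ‖v‖ / D ^ 2 = 2 * (abar * (‖v‖ / D) ^ 2) / ‖v‖ := by field_simp
    _ ≤ 2 * (abar * gauge Ω v ^ 2) / ‖v‖ := by gcongr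
    _ = ⟪gradient φ v, v⟫ / ‖v‖ := by rw [heuler]
    _ ≤ ‖gradient φ v‖ := div_le_of_le_mul₀ hv'.le (norm_nonneg _) (real_inner_le_norm _ _)

theorem gauge_sq_weight_gradient_bound
    (Ω : Set (EuclideanSpace ℝ (Fin 2)))
    (hΩo : IsOpen Ω) (hΩb : Bornology.IsBounded Ω) (hΩc : Convex ℝ Ω)
    (h0 : (0 : EuclideanSpace ℝ (Fin 2)) ∈ Ω)
    (D : ℝ) (hD : 0 < D) (hΩD : Ω ⊆ closedBall 0 D)
    (abar : ℝ) (habar : 0 < abar)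
    (v : EuclideanSpace ℝ (Fin 2)) (hv : v ≠ 0)
    (hdiff : DifferentiableAt ℝ (fun z => abar * gauge Ω z ^ 2) v) :
    ⟪gradient (fun z => abar * gauge Ω z ^ 2) v, v⟫ = 2 * (abar * gauge Ω v ^ 2) ∧
    2 * abar * ‖v‖ / D ^ 2 ≤ ‖gradient (fun z => abar * gauge Ω z ^ 2) v‖ :=
  gauge_sq_weight_gradient_bound_general Ω hΩo h0 D hD hΩD abar habar v hv hdiff
end

section
/- Let Ω be an open, bounded, convex subset of ℝ² with 0 ∈ Ω and Ω ⊆ closedBall 0 D for some D > 0, let g = gauge Ω, and let y be a point of the frontier of Ω at which g is differentiable. Then: (i) ⟪∇g(y), z − y⟫ ≤ 0 for every z in the closure of Ω (so ∇g(y) is an outward normal vector to Ω at y); (ii) ⟪∇g(y), y⟫ = 1; and (iii) ‖∇g(y)‖ ≥ 1/D. -/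
open RealInnerProductSpace Metric

/-!
The gauge `g` of a convex neighbourhood of `0` is convex and positively `1`-homogeneous, equal to
`1` on the frontier and at most `1` on the closure. Convexity makes the derivative at `y` a
subgradient, `g' (z - y) ≤ g z - g y ≤ 0` for `z` in the closure, and Euler's identity for
homogeneous functions gives `g' y = g y = 1`. Finally `1 = ⟪∇g y, y⟫ ≤ ‖∇g y‖ ‖y‖ ≤ D ‖∇g y‖`.
-/

theorem convexOn_gauge {E : Type*} [AddCommGroup E] [Module ℝ E] {s : Set E}
    (hs : Convex ℝ s) (absorbs : Absorbent ℝ s) : ConvexOn ℝ Set.univ (gauge s) := by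
  refine ⟨convex_univ, fun x _ z _ a b ha hb _ => ?_⟩
  calc gauge s (a • x + b • z) ≤ gauge s (a • x) + gauge s (b • z) := gauge_add_le hs absorbs _ _
    _ = a • gauge s x + b • gauge s z := by
      rw [gauge_smul_of_nonneg ha, gauge_smul_of_nonneg hb]

section Derivatives

variable {E : Type*} [NormedAddCommGroup E] [NormedSpace ℝ E] {f : E → ℝ} {x : E}

theorem ConvexOn.fderiv_apply_sub_le {s : Set E} {z : E} (hf : ConvexOn ℝ s f) (hx : x ∈ s)
    (hz : z ∈ s) (hdiff : DifferentiableAt ℝ f x) : fderiv ℝ f x (z - x) ≤ f z - f x := by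
  have hline : ConvexOn ℝ (AffineMap.lineMap (k := ℝ) x z ⁻¹' s)
      (f ∘ AffineMap.lineMap (k := ℝ) x z) :=
    hf.comp_affineMap _
  have hderiv : HasDerivAt (f ∘ AffineMap.lineMap (k := ℝ) x z) (fderiv ℝ f x (z - x)) 0 := by
    have hfx : HasFDerivAt f (fderiv ℝ f x) (AffineMap.lineMap (k := ℝ) x z (0 : ℝ)) := by
      simpa using hdiff.hasFDerivAt
    exact hfx.comp_hasDerivAt 0 AffineMap.hasDerivAt_lineMap
  simpa [slope_def_field] using
    hline.le_slope_of_hasDerivAt (by simpa using hx) (by simpa using hz) zero_lt_one hderiv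

theorem fderiv_apply_self_of_smul_eq (hdiff : DifferentiableAt ℝ f x)
    (hhom : ∀ t : ℝ, 0 < t → f (t • x) = t * f x) : fderiv ℝ f x x = f x := by
  have hray : HasDerivAt (fun t : ℝ => f (t • x)) (fderiv ℝ f x x) 1 := by
    have hfx : HasFDerivAt f (fderiv ℝ f x) ((1 : ℝ) • x) := by simpa using hdiff.hasFDerivAt
    exact hfx.comp_hasDerivAt 1 (by simpa using (hasDerivAt_id (1 : ℝ)).smul_const x)
  have hlin : (fun t : ℝ => f (t • x)) =ᶠ[nhds 1] fun t => t * f x := by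
    filter_upwards [Ioi_mem_nhds zero_lt_one] with t ht using hhom t ht
  simpa using (hray.congr_of_eventuallyEq hlin.symm).unique ((hasDerivAt_id 1).mul_const (f x))

theorem fderiv_gauge_apply_self {s : Set E} (hdiff : DifferentiableAt ℝ (gauge s) x) :
    fderiv ℝ (gauge s) x x = gauge s x :=
  fderiv_apply_self_of_smul_eq hdiff fun _ ht => gauge_smul_of_nonneg ht.le x

theorem fderiv_gauge_apply_sub_nonpos {s : Set E} {z : E} (hs : Convex ℝ s) (hs₀ : s ∈ nhds 0)
    (hx : x ∈ frontier s) (hz : z ∈ closure s) (hdiff : DifferentiableAt ℝ (gauge s) x) :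
    fderiv ℝ (gauge s) x (z - x) ≤ 0 := by
  have hsub := (convexOn_gauge hs (absorbent_nhds_zero hs₀)).fderiv_apply_sub_le
    (Set.mem_univ x) (Set.mem_univ z) hdiff
  rw [(gauge_eq_one_iff_mem_frontier hs hs₀).2 hx] at hsub
  linarith [(gauge_le_one_iff_mem_closure hs hs₀).2 hz]

end Derivatives

theorem gauge_gradient_outward_normal_general
    (Ω : Set (EuclideanSpace ℝ (Fin 2)))
    (hΩo : IsOpen Ω) (hΩc : Convex ℝ Ω)
    (h0 : (0 : EuclideanSpace ℝ (Fin 2)) ∈ Ω)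
    (D : ℝ) (hD : 0 < D) (hΩD : Ω ⊆ closedBall 0 D)
    (y : EuclideanSpace ℝ (Fin 2)) (hy : y ∈ frontier Ω)
    (hdiff : DifferentiableAt ℝ (gauge Ω) y) :
    (∀ z ∈ closure Ω, ⟪gradient (gauge Ω) y, z - y⟫ ≤ 0) ∧
    ⟪gradient (gauge Ω) y, y⟫ = 1 ∧
    1 / D ≤ ‖gradient (gauge Ω) y‖ := by
  have hΩ₀ : Ω ∈ nhds 0 := hΩo.mem_nhds h0
  have hnormal : ⟪gradient (gauge Ω) y, y⟫ = 1 := by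
    rw [inner_gradient_left, fderiv_gauge_apply_self hdiff,
      (gauge_eq_one_iff_mem_frontier hΩc hΩ₀).2 hy]
  refine ⟨fun z hz => ?_, hnormal, ?_⟩
  · rw [inner_gradient_left]
    exact fderiv_gauge_apply_sub_nonpos hΩc hΩ₀ hy hz hdiff
  · have hyD : ‖y‖ ≤ D := by
      simpa using closure_minimal hΩD isClosed_closedBall hy.1
    rw [div_le_iff₀ hD]
    calc 1 = ⟪gradient (gauge Ω) y, y⟫ := hnormal.symm
      _ ≤ ‖gradient (gauge Ω) y‖ * ‖y‖ := real_inner_le_norm _ _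
      _ ≤ ‖gradient (gauge Ω) y‖ * D := by gcongr

theorem gauge_gradient_outward_normal
    (Ω : Set (EuclideanSpace ℝ (Fin 2)))
    (hΩo : IsOpen Ω) (hΩb : Bornology.IsBounded Ω) (hΩc : Convex ℝ Ω)
    (h0 : (0 : EuclideanSpace ℝ (Fin 2)) ∈ Ω)
    (D : ℝ) (hD : 0 < D) (hΩD : Ω ⊆ closedBall 0 D)
    (y : EuclideanSpace ℝ (Fin 2)) (hy : y ∈ frontier Ω)
    (hdiff : DifferentiableAt ℝ (gauge Ω) y) :
    (∀ z ∈ closure Ω, ⟪gradient (gauge Ω) y, z - y⟫ ≤ 0) ∧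
    ⟪gradient (gauge Ω) y, y⟫ = 1 ∧
    1 / D ≤ ‖gradient (gauge Ω) y‖ :=
  gauge_gradient_outward_normal_general Ω hΩo hΩc h0 D hD hΩD y hy hdiff
end

section
/- Let ā > 0 and let ρ : ℝ → ℝ be twice continuously differentiable, 2π-periodic, with ρ(θ) > 0 for all θ. Let Φ : ℝ² → ℝ satisfy Φ(r cos θ, r sin θ) = ā r² / ρ(θ)² for all r > 0 and θ ∈ ℝ. Then Φ is twice continuously differentiable on ℝ² \ {0}, and for all r > 0 and θ ∈ ℝ the Laplacian of Φ satisfies ΔΦ(r cos θ, r sin θ) = (2ā/ρ(θ)²) · (1 + (3ρ'(θ)² − ρ(θ)ρ''(θ) + ρ(θ)²)/ρ(θ)²). Moreover, if ρ(θ)² + 2ρ'(θ)² − ρ(θ)ρ''(θ) > 0 for all θ, then ΔΦ(r cos θ, r sin θ) > 2ā/ρ(θ)² for all r > 0 and θ ∈ ℝ. -/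
/-!
Near a point `(r cos θ, r sin θ)` the function `A(z) = θ + arg (e^{-iθ} z)` is a smooth branch
of the polar angle with `A = θ` at that point, so the hypothesis on `Φ` says
`Φ(x, y) = (x² + y²) g(A(x, y))` nearby, with `g = ā / ρ²`. As `∇A = (-y, x) / (x² + y²)`,
the product and chain rules give `Δ((x² + y²) g(A)) = 4 g(A) + g''(A)`, and expanding
`g'' = 6āρ'²/ρ⁴ - 2āρ''/ρ³` yields the formula. The strict bound follows because
`3ρ'² - ρρ'' + ρ² ≥ ρ² + 2ρ'² - ρρ'' > 0`.
-/

open Real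

/-- First partial derivative (with respect to the first coordinate) of a
function on the plane `ℝ × ℝ`. -/
noncomputable def pderiv1 (f : ℝ × ℝ → ℝ) : ℝ × ℝ → ℝ :=
  fun p => deriv (fun u => f (u, p.2)) p.1

/-- First partial derivative (with respect to the second coordinate) of a
function on the plane `ℝ × ℝ`. -/
noncomputable def pderiv2 (f : ℝ × ℝ → ℝ) : ℝ × ℝ → ℝ :=
  fun p => deriv (fun u => f (p.1, u)) p.2

/-- The Laplacian: sum of the two pure second partial derivatives. -/
noncomputable def planeLaplacian (f : ℝ × ℝ → ℝ) : ℝ × ℝ → ℝ :=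
  fun p => pderiv1 (pderiv1 f) p + pderiv2 (pderiv2 f) p

open Filter Topology

section Congr

variable {f₁ f₂ : ℝ × ℝ → ℝ} {p : ℝ × ℝ}

lemma pderiv1_congr (h : f₁ =ᶠ[𝓝 p] f₂) : pderiv1 f₁ p = pderiv1 f₂ p :=
  EventuallyEq.deriv_eq <|
    (continuous_id.prodMk continuous_const).tendsto' p.1 p rfl |>.eventually h

lemma pderiv2_congr (h : f₁ =ᶠ[𝓝 p] f₂) : pderiv2 f₁ p = pderiv2 f₂ p :=
  EventuallyEq.deriv_eq <|
    (continuous_const.prodMk continuous_id).tendsto' p.2 p rfl |>.eventually h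

lemma planeLaplacian_congr (h : f₁ =ᶠ[𝓝 p] f₂) : planeLaplacian f₁ p = planeLaplacian f₂ p := by
  have h₁ : pderiv1 f₁ =ᶠ[𝓝 p] pderiv1 f₂ := h.eventuallyEq_nhds.mono fun _ => pderiv1_congr
  have h₂ : pderiv2 f₁ =ᶠ[𝓝 p] pderiv2 f₂ := h.eventuallyEq_nhds.mono fun _ => pderiv2_congr
  simp only [planeLaplacian, pderiv1_congr h₁, pderiv2_congr h₂]

end Congr

structure IsPolarAngleOn (A : ℝ × ℝ → ℝ) (U : Set (ℝ × ℝ)) : Prop where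
  isOpen : IsOpen U
  sq_add_sq_ne_zero : ∀ p ∈ U, p.1 ^ 2 + p.2 ^ 2 ≠ 0
  hasDerivAt_fst : ∀ p ∈ U, HasDerivAt (fun x => A (x, p.2)) (-p.2 / (p.1 ^ 2 + p.2 ^ 2)) p.1
  hasDerivAt_snd : ∀ p ∈ U, HasDerivAt (fun y => A (p.1, y)) (p.1 / (p.1 ^ 2 + p.2 ^ 2)) p.2

namespace IsPolarAngleOn

variable {A : ℝ × ℝ → ℝ} {U : Set (ℝ × ℝ)} {g g' g'' : ℝ → ℝ} {p : ℝ × ℝ}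

lemma pderiv1_sq_mul_comp (hA : IsPolarAngleOn A U) (hg : ∀ t, HasDerivAt g (g' t) t)
    (hp : p ∈ U) :
    pderiv1 (fun p => (p.1 ^ 2 + p.2 ^ 2) * g (A p)) p = 2 * p.1 * g (A p) - p.2 * g' (A p) := by
  have h := ((hasDerivAt_pow 2 p.1).add_const (p.2 ^ 2)).mul
    ((hg (A p)).comp p.1 (hA.hasDerivAt_fst p hp))
  have hq := hA.sq_add_sq_ne_zero p hp
  refine h.deriv.trans ?_
  simp only [Function.comp_apply]
  field_simp
  ring

lemma pderiv2_sq_mul_comp (hA : IsPolarAngleOn A U) (hg : ∀ t, HasDerivAt g (g' t) t)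
    (hp : p ∈ U) :
    pderiv2 (fun p => (p.1 ^ 2 + p.2 ^ 2) * g (A p)) p = 2 * p.2 * g (A p) + p.1 * g' (A p) := by
  have h := ((hasDerivAt_pow 2 p.2).const_add (p.1 ^ 2)).mul
    ((hg (A p)).comp p.2 (hA.hasDerivAt_snd p hp))
  have hq := hA.sq_add_sq_ne_zero p hp
  refine h.deriv.trans ?_
  simp only [Function.comp_apply]
  field_simp
  ring

theorem planeLaplacian_sq_mul_comp (hA : IsPolarAngleOn A U) (hg : ∀ t, HasDerivAt g (g' t) t)
    (hg' : ∀ t, HasDerivAt g' (g'' t) t) (hp : p ∈ U) :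
    planeLaplacian (fun p => (p.1 ^ 2 + p.2 ^ 2) * g (A p)) p = 4 * g (A p) + g'' (A p) := by
  have hU : U ∈ 𝓝 p := hA.isOpen.mem_nhds hp
  have h₁₁ : pderiv1 (pderiv1 fun p => (p.1 ^ 2 + p.2 ^ 2) * g (A p)) p
      = 2 * g (A p) + (2 * p.1 * g' (A p) - p.2 * g'' (A p)) * (-p.2 / (p.1 ^ 2 + p.2 ^ 2)) := by
    rw [pderiv1_congr (eventuallyEq_of_mem hU fun _ => hA.pderiv1_sq_mul_comp hg)]
    have hgA := (hg (A p)).comp p.1 (hA.hasDerivAt_fst p hp)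
    have hg'A := (hg' (A p)).comp p.1 (hA.hasDerivAt_fst p hp)
    refine ((((hasDerivAt_id p.1).const_mul 2).mul hgA).sub (hg'A.const_mul p.2)).deriv.trans ?_
    simp only [id, Function.comp_apply]
    ring
  have h₂₂ : pderiv2 (pderiv2 fun p => (p.1 ^ 2 + p.2 ^ 2) * g (A p)) p
      = 2 * g (A p) + (2 * p.2 * g' (A p) + p.1 * g'' (A p)) * (p.1 / (p.1 ^ 2 + p.2 ^ 2)) := by
    rw [pderiv2_congr (eventuallyEq_of_mem hU fun _ => hA.pderiv2_sq_mul_comp hg)]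
    have hgA := (hg (A p)).comp p.2 (hA.hasDerivAt_snd p hp)
    have hg'A := (hg' (A p)).comp p.2 (hA.hasDerivAt_snd p hp)
    refine ((((hasDerivAt_id p.2).const_mul 2).mul hgA).add (hg'A.const_mul p.1)).deriv.trans ?_
    simp only [id, Function.comp_apply]
    ring
  have hq := hA.sq_add_sq_ne_zero p hp
  rw [planeLaplacian, h₁₁, h₂₂]
  field_simp
  ring

end IsPolarAngleOn

section LocalAngle

open Complex

theorem HasDerivAt.carg_real {f : ℝ → ℂ} {f' : ℂ} {x : ℝ} (hf : HasDerivAt f f' x)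
    (hx : f x ∈ slitPlane) : HasDerivAt (fun t => arg (f t)) (f' / f x).im x := by
  have h := imCLM.hasFDerivAt.comp_hasDerivAt x (hf.clog_real hx)
  simp only [Function.comp_def, imCLM_apply, log_im] at h
  exact h

theorem Complex.contDiffAt_arg {z : ℂ} (hz : z ∈ slitPlane) {n : WithTop ℕ∞} :
    ContDiffAt ℝ n arg z := by
  have h := imCLM.contDiff.contDiffAt.comp z ((contDiffAt_log hz (n := n)).restrict_scalars ℝ)
  simp only [Function.comp_def, imCLM_apply, log_im] at h
  exact h

lemma Complex.norm_equivRealProdCLM_symm (p : ℝ × ℝ) :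
    ‖equivRealProdCLM.symm p‖ = √(p.1 ^ 2 + p.2 ^ 2) := by
  rw [equivRealProdCLM_symm_apply, norm_add_mul_I]

/-- The branch of the polar angle with values in `(φ - π, φ + π]`. -/
noncomputable def localAngle (φ : ℝ) (p : ℝ × ℝ) : ℝ :=
  φ + arg (cexp ((-φ : ℝ) * I) * equivRealProdCLM.symm p)

/-- The plane minus the closed ray in direction `φ + π`. -/
def localAngleDomain (φ : ℝ) : Set (ℝ × ℝ) :=
  (fun p => cexp ((-φ : ℝ) * I) * equivRealProdCLM.symm p) ⁻¹' slitPlane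

variable (φ : ℝ) {r : ℝ}

lemma exp_neg_mul_I_mul_polar (r : ℝ) :
    cexp ((-φ : ℝ) * I) * equivRealProdCLM.symm (r * Real.cos φ, r * Real.sin φ) = r := by
  rw [equivRealProdCLM_symm_apply]
  push_cast
  rw [show (r : ℂ) * Complex.cos φ + r * Complex.sin φ * I = r * cexp (φ * I) by
      rw [exp_mul_I]; ring,
    mul_left_comm, ← Complex.exp_add, neg_mul, neg_add_cancel, Complex.exp_zero, mul_one]

lemma localAngle_polar_self (hr : 0 ≤ r) :
    localAngle φ (r * Real.cos φ, r * Real.sin φ) = φ := by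
  rw [localAngle, exp_neg_mul_I_mul_polar, arg_ofReal_of_nonneg hr, add_zero]

lemma polar_mem_localAngleDomain (hr : 0 < r) :
    (r * Real.cos φ, r * Real.sin φ) ∈ localAngleDomain φ := by
  rw [localAngleDomain, Set.mem_preimage, exp_neg_mul_I_mul_polar]
  exact ofReal_mem_slitPlane.2 hr

lemma polar_localAngle (p : ℝ × ℝ) :
    (√(p.1 ^ 2 + p.2 ^ 2) * Real.cos (localAngle φ p),
      √(p.1 ^ 2 + p.2 ^ 2) * Real.sin (localAngle φ p)) = p := by
  set w := cexp ((-φ : ℝ) * I) * equivRealProdCLM.symm p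
  have hw : ‖w‖ = √(p.1 ^ 2 + p.2 ^ 2) := by
    rw [norm_mul, norm_exp_ofReal_mul_I, one_mul, norm_equivRealProdCLM_symm]
  have key : (‖w‖ : ℂ) * cexp (localAngle φ p * I) = equivRealProdCLM.symm p := by
    rw [localAngle, ofReal_add, add_mul, Complex.exp_add, mul_left_comm, norm_mul_exp_arg_mul_I,
      ← mul_assoc, ← Complex.exp_add]
    push_cast
    simp
  rw [← hw]
  ext
  · simpa using congrArg re key
  · simpa using congrArg im key

lemma contDiffAt_localAngle {p : ℝ × ℝ} (hp : p ∈ localAngleDomain φ) {n : WithTop ℕ∞} :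
    ContDiffAt ℝ n (localAngle φ) p :=
  contDiffAt_const.add <| (contDiffAt_arg hp).comp p
    (contDiff_const.mul equivRealProdCLM.symm.contDiff).contDiffAt

lemma isPolarAngleOn_localAngle : IsPolarAngleOn (localAngle φ) (localAngleDomain φ) where
  isOpen := isOpen_slitPlane.preimage (continuous_const.mul equivRealProdCLM.symm.continuous)
  sq_add_sq_ne_zero p hp := by
    rw [← normSq_add_mul_I, Ne, map_eq_zero, ← equivRealProdCLM_symm_apply]
    exact right_ne_zero_of_mul (slitPlane_ne_zero hp)
  hasDerivAt_fst p hp := by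
    have hz : HasDerivAt (fun x => equivRealProdCLM.symm (x, p.2)) 1 p.1 := by
      simp only [equivRealProdCLM_symm_apply]
      simpa using (hasDerivAt_id p.1).ofReal_comp.add_const ((p.2 : ℂ) * I)
    refine (((hz.const_mul _).carg_real hp).const_add φ).congr_deriv ?_
    rw [mul_div_mul_left _ _ (Complex.exp_ne_zero _), equivRealProdCLM_symm_apply, div_im,
      normSq_add_mul_I]
    simp [neg_div]
  hasDerivAt_snd p hp := by
    have hz : HasDerivAt (fun y => equivRealProdCLM.symm (p.1, y)) I p.2 := by
      simp only [equivRealProdCLM_symm_apply]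
      simpa using ((hasDerivAt_id p.2).ofReal_comp.mul_const I).const_add (p.1 : ℂ)
    refine (((hz.const_mul _).carg_real hp).const_add φ).congr_deriv ?_
    rw [mul_div_mul_left _ _ (Complex.exp_ne_zero _), equivRealProdCLM_symm_apply, div_im,
      normSq_add_mul_I]
    simp

lemma exists_polar_of_ne_zero {p : ℝ × ℝ} (hp : p ≠ 0) :
    ∃ r, 0 < r ∧ ∃ θ, (r * Real.cos θ, r * Real.sin θ) = p := by
  refine ⟨_, ?_, _, polar_localAngle 0 p⟩
  rw [← norm_equivRealProdCLM_symm]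
  simpa using hp

lemma eventuallyEq_sq_mul_comp_localAngle {Φ : ℝ × ℝ → ℝ} {w : ℝ → ℝ}
    (hΦ : ∀ r, 0 < r → ∀ θ, Φ (r * Real.cos θ, r * Real.sin θ) = r ^ 2 * w θ) (hr : 0 < r) :
    Φ =ᶠ[𝓝 (r * Real.cos φ, r * Real.sin φ)]
      fun p => (p.1 ^ 2 + p.2 ^ 2) * w (localAngle φ p) := by
  refine eventuallyEq_of_mem ((isPolarAngleOn_localAngle φ).isOpen.mem_nhds
    (polar_mem_localAngleDomain φ hr)) fun p hp => ?_
  have hq := (isPolarAngleOn_localAngle φ).sq_add_sq_ne_zero p hp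
  conv_lhs => rw [← polar_localAngle φ p]
  rw [hΦ _ (Real.sqrt_pos.2 (by positivity)), Real.sq_sqrt (by positivity)]

end LocalAngle

section Weight

variable {ρ : ℝ → ℝ} {t : ℝ}

lemma hasDerivAt_const_div_sq (a : ℝ) (hρ : DifferentiableAt ℝ ρ t) (h0 : ρ t ≠ 0) :
    HasDerivAt (fun t => a / ρ t ^ 2) (-2 * a * deriv ρ t / ρ t ^ 3) t := by
  refine ((hasDerivAt_const t a).div (hρ.hasDerivAt.fun_pow 2) (pow_ne_zero 2 h0)).congr_deriv ?_
  field_simp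
  ring

lemma hasDerivAt_mul_deriv_div_cube (c : ℝ) (hρ : DifferentiableAt ℝ ρ t)
    (hρ' : DifferentiableAt ℝ (deriv ρ) t) (h0 : ρ t ≠ 0) :
    HasDerivAt (fun t => c * deriv ρ t / ρ t ^ 3)
      (c * deriv (deriv ρ) t / ρ t ^ 3 - 3 * c * deriv ρ t ^ 2 / ρ t ^ 4) t := by
  refine ((hρ'.hasDerivAt.const_mul c).div (hρ.hasDerivAt.fun_pow 3)
    (pow_ne_zero 3 h0)).congr_deriv ?_
  field_simp
  ring

end Weight

theorem laplacian_of_polar_weight_general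
    (abar : ℝ) (habar : 0 < abar)
    (ρ : ℝ → ℝ) (hρ : ContDiff ℝ 2 ρ)
    (hpos : ∀ θ : ℝ, 0 < ρ θ)
    (Φ : ℝ × ℝ → ℝ)
    (hΦ : ∀ r : ℝ, 0 < r → ∀ θ : ℝ,
      Φ (r * cos θ, r * sin θ) = abar * r ^ 2 / ρ θ ^ 2) :
    ContDiffOn ℝ 2 Φ ({(0 : ℝ × ℝ)}ᶜ) ∧
    (∀ r : ℝ, 0 < r → ∀ θ : ℝ,
      planeLaplacian Φ (r * cos θ, r * sin θ)
        = (2 * abar / ρ θ ^ 2)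
            * (1 + (3 * deriv ρ θ ^ 2 - ρ θ * deriv (deriv ρ) θ + ρ θ ^ 2) / ρ θ ^ 2)) ∧
    ((∀ θ : ℝ, 0 < ρ θ ^ 2 + 2 * deriv ρ θ ^ 2 - ρ θ * deriv (deriv ρ) θ) →
      ∀ r : ℝ, 0 < r → ∀ θ : ℝ,
        2 * abar / ρ θ ^ 2 < planeLaplacian Φ (r * cos θ, r * sin θ)) := by
  have hρ0 t : ρ t ≠ 0 := (hpos t).ne'
  have hρ' : Differentiable ℝ ρ := hρ.differentiable two_ne_zero
  have hρ'' : Differentiable ℝ (deriv ρ) := (hρ.iterate_deriv' 1 1).differentiable one_ne_zero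
  have hΦ_loc {r} (hr : 0 < r) θ := eventuallyEq_sq_mul_comp_localAngle θ
    (w := fun t => abar / ρ t ^ 2) (fun r hr θ => (hΦ r hr θ).trans (by ring)) hr
  have hlap r (hr : 0 < r) θ : planeLaplacian Φ (r * cos θ, r * sin θ)
      = (2 * abar / ρ θ ^ 2)
          * (1 + (3 * deriv ρ θ ^ 2 - ρ θ * deriv (deriv ρ) θ + ρ θ ^ 2) / ρ θ ^ 2) := by
    rw [planeLaplacian_congr (hΦ_loc hr θ),
      (isPolarAngleOn_localAngle θ).planeLaplacian_sq_mul_comp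
      (fun t => hasDerivAt_const_div_sq abar (hρ' t) (hρ0 t))
      (fun t => hasDerivAt_mul_deriv_div_cube _ (hρ' t) (hρ'' t) (hρ0 t))
      (polar_mem_localAngleDomain θ hr), localAngle_polar_self θ hr.le]
    field_simp [hρ0 θ]
    ring
  refine ⟨fun p hp => ?_, hlap, fun hconvex r hr θ => ?_⟩
  · obtain ⟨r, hr, θ, rfl⟩ := exists_polar_of_ne_zero hp
    have hg : ContDiff ℝ 2 fun t => abar / ρ t ^ 2 :=
      contDiff_const.div (hρ.pow 2) fun t => pow_ne_zero 2 (hρ0 t)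
    refine (ContDiffAt.congr_of_eventuallyEq ?_ (hΦ_loc hr θ)).contDiffWithinAt
    exact (by fun_prop : ContDiff ℝ 2 fun p : ℝ × ℝ => p.1 ^ 2 + p.2 ^ 2).contDiffAt.mul
      (hg.contDiffAt.comp _ (contDiffAt_localAngle θ (polar_mem_localAngleDomain θ hr)))
  · rw [hlap r hr θ]
    have hX : 0 < (3 * deriv ρ θ ^ 2 - ρ θ * deriv (deriv ρ) θ + ρ θ ^ 2) / ρ θ ^ 2 :=
      div_pos (by nlinarith [hconvex θ, sq_nonneg (deriv ρ θ)]) (pow_pos (hpos θ) 2)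
    exact lt_mul_of_one_lt_right (by have := hpos θ; positivity) (lt_add_of_pos_right 1 hX)

theorem laplacian_of_polar_weight
    (abar : ℝ) (habar : 0 < abar)
    (ρ : ℝ → ℝ) (hρ : ContDiff ℝ 2 ρ)
    (hper : Function.Periodic ρ (2 * π))
    (hpos : ∀ θ : ℝ, 0 < ρ θ)
    (Φ : ℝ × ℝ → ℝ)
    (hΦ : ∀ r : ℝ, 0 < r → ∀ θ : ℝ,
      Φ (r * cos θ, r * sin θ) = abar * r ^ 2 / ρ θ ^ 2) :
    ContDiffOn ℝ 2 Φ ({(0 : ℝ × ℝ)}ᶜ) ∧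
    (∀ r : ℝ, 0 < r → ∀ θ : ℝ,
      planeLaplacian Φ (r * cos θ, r * sin θ)
        = (2 * abar / ρ θ ^ 2)
            * (1 + (3 * deriv ρ θ ^ 2 - ρ θ * deriv (deriv ρ) θ + ρ θ ^ 2) / ρ θ ^ 2)) ∧
    ((∀ θ : ℝ, 0 < ρ θ ^ 2 + 2 * deriv ρ θ ^ 2 - ρ θ * deriv (deriv ρ) θ) →
      ∀ r : ℝ, 0 < r → ∀ θ : ℝ,
        2 * abar / ρ θ ^ 2 < planeLaplacian Φ (r * cos θ, r * sin θ)) :=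
  laplacian_of_polar_weight_general abar habar ρ hρ hpos Φ hΦ
end

section
/- Let Ω be an open, bounded, convex subset of ℝ², let x₁, x₂ ∈ Ω with x₁ ≠ x₂, and set d = ‖x₁ − x₂‖/2. Let α₁ > 0 satisfy ball x₁ α₁ ⊆ Ω, let D₂ > 0 satisfy Ω ⊆ closedBall x₂ D₂, let ā > 0, and let 0 < ε < d. For j = 1, 2 define g_j(x) = gauge (Ω − x_j) (x − x_j) (the Minkowski gauge of Ω translated so that x_j is the center). Then for every x ∈ ℝ² with ‖x − x₁‖ ≤ ε one has ā g₂(x)² − ā g₁(x)² ≥ ā (d²/D₂² − ε²/α₁²). -/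
open Metric

theorem weight_separation_near_center
    (Ω : Set (EuclideanSpace ℝ (Fin 2)))
    (hΩo : IsOpen Ω) (hΩb : Bornology.IsBounded Ω) (hΩc : Convex ℝ Ω)
    (x₁ x₂ : EuclideanSpace ℝ (Fin 2)) (hx₁ : x₁ ∈ Ω) (hx₂ : x₂ ∈ Ω) (hne : x₁ ≠ x₂)
    (d : ℝ) (hd : d = ‖x₁ - x₂‖ / 2)
    (α₁ : ℝ) (hα₁ : 0 < α₁) (hball : ball x₁ α₁ ⊆ Ω)
    (D₂ : ℝ) (hD₂ : 0 < D₂) (hsub : Ω ⊆ closedBall x₂ D₂)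
    (abar : ℝ) (habar : 0 < abar)
    (ε : ℝ) (hε0 : 0 < ε) (hεd : ε < d)
    (x : EuclideanSpace ℝ (Fin 2)) (hx : ‖x - x₁‖ ≤ ε) :
    abar * (d ^ 2 / D₂ ^ 2 - ε ^ 2 / α₁ ^ 2)
      ≤ abar * gauge ((fun z => z - x₂) '' Ω) (x - x₂) ^ 2
        - abar * gauge ((fun z => z - x₁) '' Ω) (x - x₁) ^ 2 := by
  set g₁ := gauge ((fun z => z - x₁) '' Ω) (x - x₁) with hg₁
  set g₂ := gauge ((fun z => z - x₂) '' Ω) (x - x₂) with hg₂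
  -- ball 0 α₁ ⊆ Ω - x₁
  have hball1 : ball (0 : EuclideanSpace ℝ (Fin 2)) α₁ ⊆ (fun z => z - x₁) '' Ω := by
    intro v hv
    refine ⟨v + x₁, hball ?_, add_sub_cancel_right v x₁⟩
    simpa [mem_ball, dist_eq_norm] using (mem_ball_zero_iff.1 hv)
  have hsub2 : (fun z => z - x₂) '' Ω ⊆ closedBall (0 : EuclideanSpace ℝ (Fin 2)) D₂ := by
    rintro _ ⟨z, hz, rfl⟩
    simpa [mem_closedBall, dist_eq_norm] using (mem_closedBall_iff_norm.1 (hsub hz))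
  -- g₁ ≤ ε / α₁
  have h1 : g₁ ≤ ε / α₁ := by
    have := mul_gauge_le_norm (x := x - x₁) hball1
    rw [hg₁]
    calc gauge ((fun z => z - x₁) '' Ω) (x - x₁) ≤ ‖x - x₁‖ / α₁ := by
          rw [le_div_iff₀ hα₁]; linarith [this]
      _ ≤ ε / α₁ := by gcongr
  -- g₂ ≥ d / D₂
  have habs : Absorbent ℝ ((fun z => z - x₂) '' Ω) := by
    refine absorbent_nhds_zero ?_
    have : (fun z => z - x₂) '' Ω = (fun z => z + (-x₂)) '' Ω := by
      simp [sub_eq_add_neg]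
    rw [this]
    have hopen : IsOpen ((fun z => z + (-x₂)) '' Ω) := by
      have := (Homeomorph.addRight (-x₂)).isOpen_image.2 hΩo
      simpa using this
    refine hopen.mem_nhds ⟨x₂, hx₂, by simp⟩
  have hxd : d ≤ ‖x - x₂‖ := by
    have h3 : ‖x₁ - x₂‖ ≤ ‖x₁ - x‖ + ‖x - x₂‖ := norm_sub_le_norm_sub_add_norm_sub _ _ _
    have h4 : ‖x₁ - x‖ = ‖x - x₁‖ := by rw [norm_sub_rev]
    rw [hd] at *
    linarith
  have h2 : d / D₂ ≤ g₂ := by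
    have := le_gauge_of_subset_closedBall (x := x - x₂) habs hD₂.le hsub2
    calc d / D₂ ≤ ‖x - x₂‖ / D₂ := by gcongr
      _ ≤ g₂ := this
  have hg₁0 : 0 ≤ g₁ := gauge_nonneg _
  have hd0 : 0 < d := lt_trans hε0 hεd
  have key : d ^ 2 / D₂ ^ 2 - ε ^ 2 / α₁ ^ 2 ≤ g₂ ^ 2 - g₁ ^ 2 := by
    have hA : g₁ ^ 2 ≤ (ε / α₁) ^ 2 := by
      apply pow_le_pow_left₀ hg₁0 h1
    have hB : (d / D₂) ^ 2 ≤ g₂ ^ 2 := by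
      apply pow_le_pow_left₀ (by positivity) h2
    have e1 : (ε / α₁) ^ 2 = ε ^ 2 / α₁ ^ 2 := div_pow _ _ _
    have e2 : (d / D₂) ^ 2 = d ^ 2 / D₂ ^ 2 := div_pow _ _ _
    linarith
  nlinarith [key]
end
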